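/- Let F be a field, A an F-algebra, and W an irreducible A-module such that End_A(W) = F. Let U₁, U₂ be F-vector spaces and view each Uᵢ ⊗_F W as an A-module via a(u ⊗ w) = u ⊗ aw. Then every A-module homomorphism T : U₁ ⊗_F W → U₂ ⊗_F W has the form T = S ⊗ 1 for some F-linear map S : U₁ → U₂. -/

import Mathlib

open scoped TensorProduct

/-!
For fixed `u`, the map `w ↦ T (u ⊗ w)` is `A`-linear `W → U₂ ⊗ W`. In the coordinates
`U₂ ⊗ W ≅ ι →₀ W` given by a basis of `U₂`, each coordinate is an `A`-endomorphism of `W`, hence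
a scalar `c i`, and the `c i` have finite support since they are the coordinates of `T (u ⊗ w₀)`
for any `w₀ ≠ 0`; so `T (u ⊗ w) = s ⊗ w`. Applying a functional `φ` on `W` with `φ w₀ = 1` to the
right factor of `T (u ⊗ w₀)` recovers `s` linearly in `u`.
-/

/-- The action of `a : A` on an `A`-module `W`, as an `F`-linear map. -/
def smulLinearMap (F : Type*) [Field F] (A : Type*) [Ring A] [Algebra F A]
    (W : Type*) [AddCommGroup W] [Module F W] [Module A W] [IsScalarTower F A W] (a : A) :
    W →ₗ[F] W where
  toFun w := a • w
  map_add' := smul_add a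
  map_smul' c w := by simpa using (smul_comm c a w).symm

theorem TensorProduct.equivFinsuppOfBasisLeft_lTensor_apply {R M N N' ι : Type*} [CommRing R]
    [AddCommGroup M] [Module R M] [AddCommGroup N] [Module R N] [AddCommGroup N'] [Module R N']
    [DecidableEq ι] (b : Module.Basis ι R M) (φ : N →ₗ[R] N') (x : M ⊗[R] N) (i : ι) :
    equivFinsuppOfBasisLeft b (φ.lTensor M x) i = φ (equivFinsuppOfBasisLeft b x i) := by
  induction x with
  | zero => simp
  | tmul m n => simp
  | add x y hx hy => simp [hx, hy]

section

variable {F : Type*} [Field F] {A : Type*} [Ring A] [Algebra F A]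
  {W : Type*} [AddCommGroup W] [Module F W] [Module A W] [IsScalarTower F A W]

theorem exists_eq_smul_of_comp_smulLinearMap
    (hEnd : ∀ f : W →ₗ[A] W, ∃ c : F, ∀ w : W, f w = c • w) (g : W →ₗ[F] W)
    (hg : ∀ a : A, g ∘ₗ smulLinearMap F A W a = smulLinearMap F A W a ∘ₗ g) :
    ∃ c : F, ∀ w : W, g w = c • w :=
  hEnd { g with map_smul' := fun a w => LinearMap.congr_fun (hg a) w }

theorem exists_tmul_eq_of_comp_smulLinearMap [Nontrivial W]
    (hEnd : ∀ f : W →ₗ[A] W, ∃ c : F, ∀ w : W, f w = c • w)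
    {U : Type*} [AddCommGroup U] [Module F U] (f : W →ₗ[F] U ⊗[F] W)
    (hf : ∀ a : A, f ∘ₗ smulLinearMap F A W a = (smulLinearMap F A W a).lTensor U ∘ₗ f) :
    ∃ s : U, ∀ w : W, f w = s ⊗ₜ w := by
  classical
  let b := Module.Basis.ofVectorSpace F U
  let e := TensorProduct.equivFinsuppOfBasisLeft (N := W) b
  have hcoord (i) : ∃ c : F, ∀ w : W, e (f w) i = c • w :=
    exists_eq_smul_of_comp_smulLinearMap hEnd (Finsupp.lapply i ∘ₗ e.toLinearMap ∘ₗ f)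
      fun a => LinearMap.ext fun w => by
        simpa [e, TensorProduct.equivFinsuppOfBasisLeft_lTensor_apply] using
          congr(e ($(hf a) w) i)
  choose c hc using hcoord
  obtain ⟨w₀, hw₀⟩ := exists_ne (0 : W)
  have hfin : (Function.support c).Finite :=
    (e (f w₀)).hasFiniteSupport.subset fun i hi => by
      simpa [hc] using smul_ne_zero hi hw₀
  refine ⟨b.repr.symm (Finsupp.ofSupportFinite c hfin), fun w => e.injective ?_⟩
  ext i
  simp [e, hc, Finsupp.ofSupportFinite_coe]

end

theorem hom_of_tensor_with_simple_is_rTensor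
    (F : Type*) [Field F] (A : Type*) [Ring A] [Algebra F A]
    (W : Type*) [AddCommGroup W] [Module F W] [Module A W] [IsScalarTower F A W]
    (hEnd : ∀ f : W →ₗ[A] W, ∃ c : F, ∀ w : W, f w = c • w)
    (U₁ : Type*) [AddCommGroup U₁] [Module F U₁]
    (U₂ : Type*) [AddCommGroup U₂] [Module F U₂]
    (T : U₁ ⊗[F] W →ₗ[F] U₂ ⊗[F] W)
    (hT : ∀ a : A,
      T ∘ₗ LinearMap.lTensor U₁ (smulLinearMap F A W a)
        = LinearMap.lTensor U₂ (smulLinearMap F A W a) ∘ₗ T) :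
    ∃ S : U₁ →ₗ[F] U₂, T = LinearMap.rTensor W S := by
  rcases subsingleton_or_nontrivial W with _ | _
  · exact ⟨0, Subsingleton.elim _ _⟩
  have hslice (u : U₁) : ∃ s : U₂, ∀ w : W, T (u ⊗ₜ w) = s ⊗ₜ w :=
    exists_tmul_eq_of_comp_smulLinearMap hEnd (T ∘ₗ TensorProduct.mk F U₁ W u)
      fun a => LinearMap.ext fun w => by simpa [smulLinearMap] using congr($(hT a) (u ⊗ₜ w))
  obtain ⟨w₀, hw₀⟩ := exists_ne (0 : W)
  obtain ⟨φ, hφ⟩ := Module.Projective.exists_dual_eq_one F hw₀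
  refine ⟨TensorProduct.rid F U₂ ∘ₗ φ.lTensor U₂ ∘ₗ T ∘ₗ (TensorProduct.mk F U₁ W).flip w₀,
    TensorProduct.ext' fun u w => ?_⟩
  obtain ⟨s, hs⟩ := hslice u
  simp [hs, hφ]
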